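/- For every positive integer s there exists a constant C > 0 such that the following holds: for every finite abelian group G with |G| ≥ 2 and every probability distribution p : G → [0, 1] (i.e., Σ_{x∈G} p(x) = 1) satisfying p(x) = p(x⁻¹) for all x ∈ G, |supp(p)| ≤ s, and with supp(p) generating G, the second largest eigenvalue λ₂(p) := max{ Σ_{x∈G} p(x)·Re(χ(x)) : χ ∈ Ĝ, χ nontrivial } of the random walk driven by p satisfies 1 − λ₂(p) ≤ C·|G|^{−4/s}; equivalently, the relaxation time T_rel = 1/(1 − λ₂(p)) satisfies T_rel ≥ C⁻¹·|G|^{4/s}. -/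

import Mathlib

open Complex Finset

/-- The dual group `Ĝ = G →* ℂˣ` of a finite abelian group is finite. -/
noncomputable instance instFintypeDual (G : Type*) [CommGroup G] [Fintype G] :
    Fintype (G →* ℂˣ) := by
  have : NeZero (Monoid.exponent G) := ⟨Monoid.exponent_ne_zero_of_finite⟩
  have : Finite (G →* ℂˣ) := by
    obtain ⟨e⟩ := CommGroup.monoidHom_mulEquiv_of_hasEnoughRootsOfUnity G ℂ
    exact Finite.of_equiv G e.symm.toEquiv
  exact Fintype.ofFinite _

/-- The Fourier transform of `f : G → ℂ`, as a function on the dual group `G →* ℂˣ`: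
`f̂(χ) = (1/|G|) ∑_{x ∈ G} f(x) conj(χ(x))`. -/
noncomputable def fourierT {G : Type*} [CommGroup G] [Fintype G] (f : G → ℂ) :
    (G →* ℂˣ) → ℂ :=
  fun χ => (Fintype.card G : ℂ)⁻¹ * ∑ x : G, f x * (starRingEnd ℂ) ((χ x : ℂ))

/-- Normalized inner product `⟨u,w⟩ = (1/|α|) ∑ u(χ) conj(w(χ))`. -/
noncomputable def inn {α : Type*} [Fintype α] (u w : α → ℂ) : ℂ :=
  (Fintype.card α : ℂ)⁻¹ * ∑ χ : α, u χ * (starRingEnd ℂ) (w χ)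

/-- Normalized convolution `(u∗w)(χ) = (1/|α|) ∑_ρ u(χρ⁻¹) w(ρ)`. -/
noncomputable def convol {α : Type*} [Group α] [Fintype α] (u w : α → ℂ) : α → ℂ :=
  fun χ => (Fintype.card α : ℂ)⁻¹ * ∑ ρ : α, u (χ * ρ⁻¹) * w ρ

/-- The Rayleigh quotient `R_f(v) = |G| ⟨f̂ ∗ v, v⟩ / ⟨v, v⟩`. -/
noncomputable def Rq {G : Type*} [CommGroup G] [Fintype G] (f : G → ℂ)
    (v : (G →* ℂˣ) → ℂ) : ℂ :=
  (Fintype.card G : ℂ) * inn (convol (fourierT f) v) v / inn v v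

/-- `nu f k` is the `k`-th largest value (1-indexed, with multiplicity) of the
real-valued function `f` on a finite type. -/
noncomputable def nu {G : Type*} [Fintype G] (f : G → ℝ) (k : ℕ) : ℝ :=
  ((Finset.univ.val.map f).sort (· ≤ ·)).getD (Fintype.card G - k) 0

/-- `f` is positive definite: every Fourier coefficient is a nonnegative real number. -/
def PosDef {G : Type*} [CommGroup G] [Fintype G] (f : G → ℂ) : Prop :=
  ∀ χ : G →* ℂˣ, (fourierT f χ).im = 0 ∧ 0 ≤ (fourierT f χ).re

open scoped Real

/-!
The eigenvalue at `χ` is `∑ p(x) Re χ(x)`, so it suffices to find a nontrivial character that is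
close to `1` on the support `S`. Since `S` is symmetric, `S` consists of involutions and of at most
`s / 2` pairs `{y, y⁻¹}`. Pigeonholing the `|G|` characters by the value `χ(y) = ±1` at the
involutions and by the argument of `χ(y)`, to precision `2π / N`, at one element `y` of each pair
gives two distinct characters whose quotient `χ` satisfies `‖χ(x) - 1‖ ≤ 2π / N` on `S`, as soon as
`(N + 1)^(s / 2) 2^s < |G|`; this allows `N ≍ |G|^(2/s)`. Then
`1 - Re χ(x) = ‖χ(x) - 1‖² / 2 ≲ |G|^(-4/s)`. Since `S` generates `G`, `λ₂ < 1`, and the bound on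
the relaxation time follows by inversion.
-/

namespace Complex

lemma one_sub_re_eq_norm_sub_one_sq_div_two {z : ℂ} (hz : ‖z‖ = 1) :
    1 - z.re = ‖z - 1‖ ^ 2 / 2 := by
  have h := normSq_eq_norm_sq z
  rw [hz, normSq_apply] at h
  rw [← normSq_eq_norm_sq, normSq_apply]
  simp only [sub_re, one_re, sub_im, one_im, sub_zero]
  linear_combination (-1 / 2 : ℝ) * h

lemma norm_inv_sub_one {z : ℂ} (hz : ‖z‖ = 1) : ‖z⁻¹ - 1‖ = ‖z - 1‖ := by
  have hz0 : z ≠ 0 := norm_ne_zero_iff.mp (by rw [hz]; exact one_ne_zero)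
  rw [show z⁻¹ - 1 = z⁻¹ * (1 - z) by field_simp, norm_mul, norm_inv, hz, inv_one, one_mul,
    norm_sub_rev]

lemma norm_sub_le_abs_arg_sub {x y : ℂ} (hx : ‖x‖ = 1) (hy : ‖y‖ = 1) :
    ‖x - y‖ ≤ |x.arg - y.arg| := by
  have polar : ∀ {z : ℂ}, ‖z‖ = 1 → exp (z.arg * I) = z := fun {z} hz => by
    simpa [hz] using norm_mul_exp_arg_mul_I z
  calc ‖x - y‖ = ‖y * (exp (I * ↑(x.arg - y.arg)) - 1)‖ := by
        rw [mul_sub, mul_one, ← polar hy, ← exp_add, ofReal_sub, polar hy]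
        congr 2
        conv_lhs => rw [← polar hx]
        congr 1; ring
    _ ≤ |x.arg - y.arg| := by
        rw [norm_mul, hy, one_mul, ← Real.norm_eq_abs]
        exact Real.norm_exp_I_mul_ofReal_sub_one_le

end Complex

lemma MonoidHom.norm_apply_eq_one {G : Type*} [Group G] [Finite G] (χ : G →* ℂˣ) (x : G) :
    ‖(χ x : ℂ)‖ = 1 :=
  Complex.norm_eq_one_of_pow_eq_one (n := Nat.card G)
    (by rw [← Units.val_pow_eq_pow_val, ← map_pow, pow_card_eq_one', map_one, Units.val_one])
    Nat.card_pos.ne'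

lemma card_dual (G : Type*) [CommGroup G] [Fintype G] :
    Fintype.card (G →* ℂˣ) = Fintype.card G := by
  have : NeZero (Monoid.exponent G) := ⟨Monoid.exponent_ne_zero_of_finite⟩
  simp only [← Nat.card_eq_fintype_card]
  exact CommGroup.card_monoidHom_of_hasEnoughRootsOfUnity G ℂ

lemma nontrivial_dual {G : Type*} [CommGroup G] [Fintype G] (hG : 2 ≤ Fintype.card G) :
    Nontrivial (G →* ℂˣ) := by
  rw [← Fintype.one_lt_card_iff_nontrivial, card_dual]
  omega

/-- The index of the arc `[2πk / N - π, 2π(k + 1) / N - π)` containing `arg z`. -/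
noncomputable def arcBox (N : ℕ) (z : ℂ) : Fin (N + 1) :=
  ⟨⌊(z.arg + π) / (2 * π) * N⌋₊, Nat.lt_succ_of_le <| Nat.floor_le_of_le <| by
    have := arg_le_pi z
    have : (z.arg + π) / (2 * π) ≤ 1 := by rw [div_le_one (by positivity)]; linarith
    exact mul_le_of_le_one_left (Nat.cast_nonneg N) this⟩

lemma abs_arg_sub_le_of_arcBox_eq {N : ℕ} (hN : 0 < N) {z w : ℂ}
    (h : arcBox N z = arcBox N w) : |z.arg - w.arg| ≤ 2 * π / N := by
  have hpos : ∀ u : ℂ, 0 ≤ (u.arg + π) / (2 * π) * N := fun u => by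
    have := neg_pi_lt_arg u
    have : 0 ≤ u.arg + π := by linarith
    positivity
  have hN' : (0 : ℝ) < N := Nat.cast_pos.mpr hN
  have hfloor : (⌊(z.arg + π) / (2 * π) * N⌋₊ : ℝ) = ⌊(w.arg + π) / (2 * π) * N⌋₊ :=
    congrArg (fun i : Fin (N + 1) => (i : ℝ)) h
  set a := (z.arg + π) / (2 * π) * N
  set b := (w.arg + π) / (2 * π) * N
  have hab : |a - b| ≤ 1 := abs_le.mpr
    ⟨by linarith [Nat.lt_floor_add_one b, Nat.floor_le (hpos z)],
     by linarith [Nat.lt_floor_add_one a, Nat.floor_le (hpos w)]⟩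
  have hdiff : z.arg - w.arg = (a - b) * (2 * π / N) := by
    simp only [a, b]; field_simp; ring
  rw [hdiff, abs_mul, abs_of_pos (by positivity : (0 : ℝ) < 2 * π / N)]
  exact mul_le_of_le_one_left (by positivity) hab

lemma Finset.card_filter_inv_eq_add_two_mul_card_filter_lt_inv {G : Type*} [Group G]
    [LinearOrder G] (S : Finset G) (hS : ∀ x ∈ S, x⁻¹ ∈ S) :
    #{x ∈ S | x⁻¹ = x} + 2 * #{x ∈ S | x < x⁻¹} = #S := by
  have hswap : #{x ∈ S | x⁻¹ < x} = #{x ∈ S | x < x⁻¹} :=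
    card_nbij' (·⁻¹) (·⁻¹) (by intro x hx; simp_all) (by intro x hx; simp_all)
      (fun x _ => inv_inv x) (fun x _ => inv_inv x)
  have hsplit : #{x ∈ S | x < x⁻¹} + #{x ∈ S | x⁻¹ < x} = #{x ∈ S | ¬x⁻¹ = x} := by
    rw [← card_union_of_disjoint (disjoint_filter.mpr fun x _ h₁ h₂ => lt_asymm h₁ h₂)]
    congr 1
    ext x
    simp only [mem_union, mem_filter, ← and_or_left, ← ne_eq, ne_comm (a := x⁻¹), lt_or_lt_iff_ne]
  have := S.card_filter_add_card_filter_not (fun x => x⁻¹ = x)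
  omega

lemma eq_of_sq_eq_one_of_eq_one_iff {R : Type*} [Ring R] [NoZeroDivisors R] {a b : R}
    (ha : a ^ 2 = 1) (hb : b ^ 2 = 1) (h : a = 1 ↔ b = 1) : a = b := by
  rcases sq_eq_one_iff.mp ha with rfl | rfl <;> rcases sq_eq_one_iff.mp hb with rfl | rfl <;>
    simp_all

theorem exists_ne_one_forall_norm_apply_sub_one_le {G : Type*} [CommGroup G] [Fintype G]
    (S : Finset G) (hS : ∀ x ∈ S, x⁻¹ ∈ S) {N : ℕ} (hN : 0 < N)
    (hcard : (N + 1) ^ (#S / 2) * 2 ^ #S < Fintype.card G) :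
    ∃ χ : G →* ℂˣ, χ ≠ 1 ∧ ∀ x ∈ S, ‖(χ x : ℂ) - 1‖ ≤ 2 * π / N := by
  classical
  -- any linear order picks one element out of each pair `{x, x⁻¹}`
  let _ : LinearOrder G := LinearOrder.lift' _ (Fintype.equivFin G).injective
  have hcount := S.card_filter_inv_eq_add_two_mul_card_filter_lt_inv hS
  set pairs := {x ∈ S | x < x⁻¹}
  set involutions := {x ∈ S | x⁻¹ = x}
  let F (ψ : G →* ℂˣ) : (pairs → Fin (N + 1)) × (involutions → Bool) :=
    (fun y => arcBox N (ψ y), fun y => decide ((ψ y : ℂ) = 1))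
  have hlt : Fintype.card ((pairs → Fin (N + 1)) × (involutions → Bool)) <
      Fintype.card (G →* ℂˣ) := by
    simp only [Fintype.card_prod, Fintype.card_fun, Fintype.card_fin, Fintype.card_coe,
      Fintype.card_bool, card_dual]
    calc (N + 1) ^ #pairs * 2 ^ #involutions ≤ (N + 1) ^ (#S / 2) * 2 ^ #S := by
          gcongr (N + 1) ^ ?_ * 2 ^ ?_ <;> omega
      _ < _ := hcard
  obtain ⟨χ₁, χ₂, hne, hF⟩ := Fintype.exists_ne_map_eq_of_card_lt F hlt
  have hval (y : G) : ((χ₁ / χ₂) y : ℂ) = χ₁ y / χ₂ y := by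
    simp [Units.val_div_eq_div_val]
  have hpair (y : G) (hy : y ∈ pairs) : ‖((χ₁ / χ₂) y : ℂ) - 1‖ ≤ 2 * π / N := by
    have hbox : arcBox N (χ₁ y) = arcBox N (χ₂ y) := congrFun (congrArg Prod.fst hF) ⟨y, hy⟩
    rw [hval, div_sub_one (Units.ne_zero _), norm_div, χ₂.norm_apply_eq_one, div_one]
    exact (norm_sub_le_abs_arg_sub (χ₁.norm_apply_eq_one y) (χ₂.norm_apply_eq_one y)).trans
      (abs_arg_sub_le_of_arcBox_eq hN hbox)
  have hinvol (y : G) (hy : y ∈ involutions) : ((χ₁ / χ₂) y : ℂ) = 1 := by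
    have hyy : y * y = 1 := by
      nth_rewrite 1 [← (mem_filter.mp hy).2]
      exact inv_mul_cancel y
    have hsq (ψ : G →* ℂˣ) : (ψ y : ℂ) ^ 2 = 1 := by
      rw [← Units.val_pow_eq_pow_val, ← map_pow, sq, hyy, map_one, Units.val_one]
    have hiff := congrFun (congrArg Prod.snd hF) ⟨y, hy⟩
    simp only [F, decide_eq_decide] at hiff
    rw [hval, eq_of_sq_eq_one_of_eq_one_iff (hsq χ₁) (hsq χ₂) hiff, div_self (Units.ne_zero _)]
  refine ⟨χ₁ / χ₂, div_ne_one.mpr hne, fun x hx => ?_⟩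
  rcases lt_trichotomy x x⁻¹ with hlt | heq | hgt
  · exact hpair x (mem_filter.mpr ⟨hx, hlt⟩)
  · rw [hinvol x (mem_filter.mpr ⟨hx, heq.symm⟩), sub_self, norm_zero]
    positivity
  · have := hpair x⁻¹ (mem_filter.mpr ⟨hS x hx, by rwa [inv_inv]⟩)
    rwa [map_inv, Units.val_inv_eq_inv_val, norm_inv_sub_one ((χ₁ / χ₂).norm_apply_eq_one x)]
      at this

lemma exists_nat_half_le_and_add_one_le {x : ℝ} (hx : 4 ≤ x) :
    ∃ N : ℕ, 0 < N ∧ x / 2 ≤ N ∧ (N : ℝ) + 1 ≤ x := by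
  have hfloor : 4 ≤ ⌊x⌋₊ := Nat.le_floor (by exact_mod_cast hx)
  refine ⟨⌊x⌋₊ - 1, by omega, ?_, ?_⟩ <;>
    rw [Nat.cast_sub (by omega), Nat.cast_one]
  · linarith [Nat.lt_floor_add_one x]
  · linarith [Nat.floor_le (by linarith : 0 ≤ x)]

lemma pow_div_two_mul_two_pow_lt {n m k s : ℕ} (hs : s ≠ 0) (hk : k ≤ s) (hm : 1 ≤ m)
    (hmn : (m : ℝ) ≤ (n : ℝ) ^ ((2 : ℝ) / s) / 16) : m ^ (k / 2) * 2 ^ k < n := by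
  have hn : 0 < n := Nat.pos_of_ne_zero fun hn => by
    rw [hn, Nat.cast_zero, Real.zero_rpow (by positivity), zero_div] at hmn
    exact absurd hmn (by exact_mod_cast Nat.not_le.mpr hm)
  have hsq : (m ^ (k / 2) * 2 ^ k) ^ 2 ≤ m ^ s * 4 ^ s := by
    rw [mul_pow, ← pow_mul, ← pow_mul, show (2 : ℕ) ^ (k * 2) = 4 ^ k by rw [pow_mul']; norm_num]
    gcongr <;> omega
  have hroot : ((n : ℝ) ^ ((2 : ℝ) / s)) ^ s = (n : ℝ) ^ 2 := by
    rw [← Real.rpow_natCast, ← Real.rpow_mul (Nat.cast_nonneg n),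
      div_mul_cancel₀ _ (Nat.cast_ne_zero.mpr hs)]
    exact Real.rpow_natCast _ 2
  refine lt_of_pow_lt_pow_left₀ 2 (Nat.zero_le n) ?_
  have : ((m : ℝ) ^ s * 4 ^ s) < (n : ℝ) ^ 2 := by
    calc (m : ℝ) ^ s * 4 ^ s ≤ ((n : ℝ) ^ ((2 : ℝ) / s) / 16) ^ s * 4 ^ s := by gcongr
      _ = (n : ℝ) ^ 2 / 4 ^ s := by
        rw [div_pow, hroot, show (16 : ℝ) ^ s = 4 ^ s * 4 ^ s by rw [← mul_pow]; norm_num]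
        field_simp
      _ < (n : ℝ) ^ 2 := div_lt_self (by positivity) (one_lt_pow₀ (by norm_num) hs)
  exact_mod_cast hsq.trans_lt (by exact_mod_cast this)

lemma MonoidHom.one_sub_re_apply_le_two {G : Type*} [Group G] [Finite G] (χ : G →* ℂˣ)
    (x : G) : 1 - (χ x : ℂ).re ≤ 2 := by
  have := neg_le_of_abs_le ((abs_re_le_norm (χ x : ℂ)).trans_eq (χ.norm_apply_eq_one x))
  linarith

theorem exists_ne_one_forall_one_sub_re_le {G : Type*} [CommGroup G] [Fintype G]
    (hG : 2 ≤ Fintype.card G) (S : Finset G) (hS : ∀ x ∈ S, x⁻¹ ∈ S) {s : ℕ} (hSs : #S ≤ s) :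
    ∃ χ : G →* ℂˣ, χ ≠ 1 ∧
      ∀ x ∈ S, 1 - (χ x : ℂ).re ≤ 2 ^ 15 * (Fintype.card G : ℝ) ^ (-(4 : ℝ) / s) := by
  set n := Fintype.card G
  set y := (n : ℝ) ^ ((2 : ℝ) / s)
  have hy0 : 0 < y := Real.rpow_pos_of_pos (by positivity) _
  have hpow : (n : ℝ) ^ (-(4 : ℝ) / s) = (y ^ 2)⁻¹ := by
    rw [← Real.rpow_natCast, ← Real.rpow_mul (Nat.cast_nonneg n),
      ← Real.rpow_neg (Nat.cast_nonneg n)]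
    ring_nf
  rw [hpow]
  by_cases hy : 64 ≤ y
  · obtain ⟨N, hN, hNlow, hNup⟩ := exists_nat_half_le_and_add_one_le (x := y / 16) (by linarith)
    have hs : s ≠ 0 := by
      rintro rfl
      simp only [y, CharP.cast_eq_zero, div_zero, Real.rpow_zero] at hy
      norm_num at hy
    obtain ⟨χ, hχ, hclose⟩ := exists_ne_one_forall_norm_apply_sub_one_le S hS hN
      (pow_div_two_mul_two_pow_lt hs hSs (by omega) (by push_cast; exact hNup))
    refine ⟨χ, hχ, fun x hx => ?_⟩
    have hN' : y / 32 ≤ N := by linarith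
    calc 1 - (χ x : ℂ).re = ‖(χ x : ℂ) - 1‖ ^ 2 / 2 :=
          one_sub_re_eq_norm_sub_one_sq_div_two (χ.norm_apply_eq_one x)
      _ ≤ (2 * π / N) ^ 2 / 2 := by gcongr; exact hclose x hx
      _ ≤ (2 * 4 / (y / 32)) ^ 2 / 2 := by gcongr; exact Real.pi_le_four
      _ = 2 ^ 15 * (y ^ 2)⁻¹ := by field_simp; norm_num
  · have := nontrivial_dual hG
    obtain ⟨χ, hχ⟩ := exists_ne (1 : G →* ℂˣ)
    refine ⟨χ, hχ, fun x _ => (χ.one_sub_re_apply_le_two x).trans ?_⟩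
    rw [le_mul_inv_iff₀ (by positivity)]
    nlinarith

section RandomWalk

variable {G : Type*} [CommGroup G] [Fintype G] {p : G → ℝ}

def nontrivialEigenvalues (p : G → ℝ) : Set ℝ :=
  {l : ℝ | ∃ χ : G →* ℂˣ, χ ≠ 1 ∧ l = ∑ x : G, p x * ((χ x : ℂ)).re}

noncomputable def lambdaTwo (p : G → ℝ) : ℝ :=
  sSup (nontrivialEigenvalues p)

lemma finite_nontrivialEigenvalues (p : G → ℝ) : (nontrivialEigenvalues p).Finite :=
  (Set.finite_range fun χ : G →* ℂˣ => ∑ x : G, p x * ((χ x : ℂ)).re).subset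
    fun _ ⟨χ, _, hl⟩ => ⟨χ, hl.symm⟩

lemma sum_mul_re_lt_one (hp0 : ∀ x, 0 ≤ p x) (hp1 : ∑ x, p x = 1)
    (hgen : Subgroup.closure (Function.support p) = ⊤) {χ : G →* ℂˣ} (hχ : χ ≠ 1) :
    ∑ x, p x * (χ x : ℂ).re < 1 := by
  obtain ⟨x, hpx, hχx⟩ : ∃ x, p x ≠ 0 ∧ χ x ≠ 1 := by
    by_contra! h
    exact hχ (MonoidHom.eq_of_eqOn_dense hgen fun x hx => h x hx)
  have hre : (χ x : ℂ).re < 1 := by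
    refine lt_of_le_of_ne ((re_le_norm _).trans_eq (χ.norm_apply_eq_one x)) fun h => hχx ?_
    have hnorm := one_sub_re_eq_norm_sub_one_sq_div_two (χ.norm_apply_eq_one x)
    rw [h, sub_self] at hnorm
    have : ‖(χ x : ℂ) - 1‖ = 0 := pow_eq_zero_iff two_ne_zero |>.mp (by linarith)
    exact Units.val_eq_one.mp (sub_eq_zero.mp (norm_eq_zero.mp this))
  calc ∑ x, p x * (χ x : ℂ).re < ∑ x, p x * 1 := by
        refine sum_lt_sum (fun y _ => ?_) ⟨x, mem_univ x, ?_⟩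
        · exact mul_le_mul_of_nonneg_left
            ((re_le_norm _).trans_eq (χ.norm_apply_eq_one y)) (hp0 y)
        · exact mul_lt_mul_of_pos_left hre ((hp0 x).lt_of_ne' hpx)
    _ = 1 := by simp [hp1]

lemma lambdaTwo_lt_one (hG : 2 ≤ Fintype.card G) (hp0 : ∀ x, 0 ≤ p x) (hp1 : ∑ x, p x = 1)
    (hgen : Subgroup.closure (Function.support p) = ⊤) : lambdaTwo p < 1 := by
  have := nontrivial_dual hG
  obtain ⟨χ, hχ⟩ := exists_ne (1 : G →* ℂˣ)
  obtain ⟨χ₀, hχ₀, hmax⟩ := Set.Nonempty.csSup_mem (s := nontrivialEigenvalues p)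
    ⟨_, χ, hχ, rfl⟩ (finite_nontrivialEigenvalues p)
  rw [lambdaTwo, hmax]
  exact sum_mul_re_lt_one hp0 hp1 hgen hχ₀

lemma sum_mul_re_le_lambdaTwo (p : G → ℝ) {χ : G →* ℂˣ} (hχ : χ ≠ 1) :
    ∑ x, p x * (χ x : ℂ).re ≤ lambdaTwo p :=
  le_csSup (finite_nontrivialEigenvalues p).bddAbove ⟨χ, hχ, rfl⟩

lemma one_sub_le_sum_mul_re (hp0 : ∀ x, 0 ≤ p x) (hp1 : ∑ x, p x = 1) {χ : G →* ℂˣ} {ε : ℝ}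
    (hχ : ∀ x, p x ≠ 0 → 1 - (χ x : ℂ).re ≤ ε) : 1 - ε ≤ ∑ x, p x * (χ x : ℂ).re :=
  calc 1 - ε = ∑ x, p x * (1 - ε) := by rw [← sum_mul, hp1, one_mul]
    _ ≤ ∑ x, p x * (χ x : ℂ).re := sum_le_sum fun x _ => by
      rcases eq_or_ne (p x) 0 with hx | hx
      · simp [hx]
      · exact mul_le_mul_of_nonneg_left (by linarith [hχ x hx]) (hp0 x)

end RandomWalk

theorem stmt_16_general (s : ℕ) :
    ∃ C : ℝ, 0 < C ∧
      ∀ (G : Type*) [CommGroup G] [Fintype G] (p : G → ℝ),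
        2 ≤ Fintype.card G →
        (∀ x, 0 ≤ p x) → (∑ x : G, p x) = 1 →
        (∀ x, p x = p x⁻¹) →
        (Function.support p).ncard ≤ s →
        Subgroup.closure (Function.support p) = ⊤ →
        1 - sSup {l : ℝ | ∃ χ : G →* ℂˣ, χ ≠ 1 ∧
            l = ∑ x : G, p x * ((χ x : ℂ)).re} ≤
          C * (Fintype.card G : ℝ) ^ (-(4 : ℝ) / s) ∧
        C⁻¹ * (Fintype.card G : ℝ) ^ ((4 : ℝ) / s) ≤
          (1 - sSup {l : ℝ | ∃ χ : G →* ℂˣ, χ ≠ 1 ∧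
            l = ∑ x : G, p x * ((χ x : ℂ)).re})⁻¹ := by
  refine ⟨2 ^ 15, by positivity, fun G _ _ p hG hp0 hp1 hsym hsupp hgen => ?_⟩
  classical
  set S := (Function.support p).toFinset
  have hS : ∀ x ∈ S, x⁻¹ ∈ S := fun x hx => by
    simpa [S, ← hsym] using hx
  have hSs : #S ≤ s := by rwa [← Set.ncard_eq_toFinset_card']
  obtain ⟨χ, hχ, hnear⟩ := exists_ne_one_forall_one_sub_re_le hG S hS hSs
  have hgap : 1 - lambdaTwo p ≤ 2 ^ 15 * (Fintype.card G : ℝ) ^ (-(4 : ℝ) / s) := by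
    have := one_sub_le_sum_mul_re hp0 hp1 fun x hx => hnear x (by simpa [S] using hx)
    linarith [sum_mul_re_le_lambdaTwo p hχ]
  have hpos : 0 < 1 - lambdaTwo p := sub_pos.mpr (lambdaTwo_lt_one hG hp0 hp1 hgen)
  refine ⟨hgap, ?_⟩
  calc (2 ^ 15)⁻¹ * (Fintype.card G : ℝ) ^ ((4 : ℝ) / s)
      = (2 ^ 15 * (Fintype.card G : ℝ) ^ (-(4 : ℝ) / s))⁻¹ := by
        rw [neg_div, Real.rpow_neg (Nat.cast_nonneg _), mul_inv, inv_inv]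
    _ ≤ (1 - lambdaTwo p)⁻¹ := inv_anti₀ hpos hgap

/-- for each `s ≥ 1` there is `C > 0` such that for every finite abelian
group `G` with `|G| ≥ 2` and every symmetric probability `p` on `G` with
`|supp(p)| ≤ s` whose support generates `G`, the second largest eigenvalue
`λ₂ = max{Σₓ p(x) Re χ(x) : χ ≠ 1}` satisfies `1 − λ₂ ≤ C |G|^{−4/s}`;
equivalently `T_rel = 1/(1 − λ₂) ≥ C⁻¹ |G|^{4/s}`. -/
theorem stmt_16 (s : ℕ) (hs : 0 < s) :
    ∃ C : ℝ, 0 < C ∧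
      ∀ (G : Type*) [CommGroup G] [Fintype G] (p : G → ℝ),
        2 ≤ Fintype.card G →
        (∀ x, 0 ≤ p x) → (∑ x : G, p x) = 1 →
        (∀ x, p x = p x⁻¹) →
        (Function.support p).ncard ≤ s →
        Subgroup.closure (Function.support p) = ⊤ →
        1 - sSup {l : ℝ | ∃ χ : G →* ℂˣ, χ ≠ 1 ∧
            l = ∑ x : G, p x * ((χ x : ℂ)).re} ≤
          C * (Fintype.card G : ℝ) ^ (-(4 : ℝ) / s) ∧
        C⁻¹ * (Fintype.card G : ℝ) ^ ((4 : ℝ) / s) ≤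
          (1 - sSup {l : ℝ | ∃ χ : G →* ℂˣ, χ ≠ 1 ∧
            l = ∑ x : G, p x * ((χ x : ℂ)).re})⁻¹ :=
  stmt_16_general s
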